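/- For every parallelized quantum 2-tester (Π₁, Π₂) with Π₁ + Π₂ = I₈ ⊗ X, there exists a parallelized quantum 2-tester (Π₁', Π₂') with Π₁' + Π₂' = I₈ ⊗ X' such that (1/2)·Tr(M₁Π₁' + M₂Π₂') = (1/2)·Tr(M₁Π₁ + M₂Π₂) and X' commutes with S ⊗ I₂, where S is the 4×4 swap operator exchanging the H1 and H2 factors. Consequently the optimal average success probability of (1,1)-equivalence determination under parallelized schemes is achieved with X commuting with the swap of H1 and H2. -/

import Mathlib

/-!
Let `σ` swap `K1 ↔ K2` and `H1 ↔ H2` simultaneously. Conjugating by `σ` exchanges `M₁` and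
`M₂` (it swaps the roles of `U₁` and `U₂`, and Fubini swaps the integrals back), and maps
`I₈ ⊗ X` to `I₈ ⊗ S X S`, where `S` swaps `H1 ↔ H2`. Hence averaging the tester
`(Π₁, Π₂)` with the conjugated, relabelled tester `(σ Π₂ σ, σ Π₁ σ)` keeps the success
probability and yields `X' = (X + S X S) / 2`, which commutes with `S`.
-/

open MeasureTheory Matrix ComplexOrder

noncomputable section

/-- `SU(2)`: the special unitary group of 2×2 complex matrices. -/
abbrev SU2 := Matrix.specialUnitaryGroup (Fin 2) ℂ

instance : MeasurableSpace SU2 := borel SU2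

abbrev Q := Fin 2

abbrev Mat2 := Matrix Q Q ℂ

/-- The rank-one outer product `|v⟩⟨v|`. -/
def outer {n : Type*} (v : n → ℂ) : Matrix n n ℂ :=
  fun a b => v a * (starRingEnd ℂ) (v b)

/-- Index of the three-qubit factor `K1⊗K2⊗K3` (or `H1⊗H2⊗H3`). -/
abbrev Idx3 := Q × Q × Q

abbrev Mat8 := Matrix Idx3 Idx3 ℂ

/-- Index of the six-qubit space `K1⊗K2⊗K3⊗H1⊗H2⊗H3`. -/
abbrev Idx6 := Idx3 × Idx3

abbrev Mat64 := Matrix Idx6 Idx6 ℂ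

/-- Kronecker product of three qubit operators. -/
def kron3 (A B C : Mat2) : Mat8 :=
  fun p q => A p.1 q.1 * B p.2.1 q.2.1 * C p.2.2 q.2.2

/-- The unnormalized maximally entangled vector `|I⟩⟩ = Σ |ijk⟩⊗|ijk⟩`. -/
def ketI : Idx6 → ℂ := fun p => if p.1 = p.2 then 1 else 0

/-- `W ⊗ I₈`. -/
def WtI (W : Mat8) : Mat64 := fun p q => W p.1 q.1 * (if p.2 = q.2 then 1 else 0)

/-- `|W⟩⟩ = (W ⊗ I₈)|I⟩⟩`. -/
def ketW (W : Mat8) : Idx6 → ℂ := WtI W *ᵥ ketI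

/-- `M₁ = ∫∫ |U₁⊗U₂⊗U₁⟩⟩⟨⟨U₁⊗U₂⊗U₁| dμ(U₁)dμ(U₂)`, the integral taken entrywise. -/
def M1 (μ : Measure SU2) : Mat64 := fun a b =>
  ∫ U₁ : SU2, ∫ U₂ : SU2, outer (ketW (kron3 U₁ U₂ U₁)) a b ∂μ ∂μ

/-- `M₂ = ∫∫ |U₁⊗U₂⊗U₂⟩⟩⟨⟨U₁⊗U₂⊗U₂| dμ(U₁)dμ(U₂)`, the integral taken entrywise. -/
def M2 (μ : Measure SU2) : Mat64 := fun a b =>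
  ∫ U₁ : SU2, ∫ U₂ : SU2, outer (ketW (kron3 U₁ U₂ U₂)) a b ∂μ ∂μ

/-- `I₈ ⊗ X` : identity on `K1⊗K2⊗K3` tensored with `X` on `H1⊗H2⊗H3`. -/
def IdKX (X : Mat8) : Mat64 := fun p q => (if p.1 = q.1 then 1 else 0) * X p.2 q.2

/-- The swap operator `S` on `ℂ²⊗ℂ²`, `S(|x⟩⊗|y⟩) = |y⟩⊗|x⟩`. -/
def swap2 : Matrix (Q × Q) (Q × Q) ℂ := fun p q =>
  if p.1 = q.2 ∧ p.2 = q.1 then 1 else 0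

/-- `S ⊗ I₂` : the swap of the `H1` and `H2` factors, tensored with the identity on
`H3`. -/
def SwI : Mat8 := fun p q =>
  swap2 (p.1, p.2.1) (q.1, q.2.1) * (if p.2.2 = q.2.2 then 1 else 0)

open Equiv

instance : SecondCountableTopology Mat2 :=
  inferInstanceAs (SecondCountableTopology (Q → Q → ℂ))

instance : SecondCountableTopology SU2 :=
  TopologicalSpace.secondCountableTopology_induced _ _ Subtype.val

instance : BorelSpace SU2 := ⟨rfl⟩

namespace Matrix

variable {m n R : Type*} [Fintype n]

theorem trace_submatrix_equiv [Fintype m] [AddCommMonoid R] (M : Matrix n n R) (e : m ≃ n) :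
    (M.submatrix e e).trace = M.trace :=
  Equiv.sum_comp e fun i => M i i

theorem trace_mul_submatrix_equiv [NonUnitalNonAssocSemiring R] (A B : Matrix n n R) (e : n ≃ n) :
    (A * B.submatrix e e).trace = (A.submatrix e.symm e.symm * B).trace := by
  rw [← trace_submatrix_equiv (A.submatrix e.symm e.symm * B) e, ← submatrix_mul_equiv _ _ _ e,
    submatrix_submatrix, symm_comp_self, submatrix_id_id]

variable [DecidableEq n]

theorem commute_permMatrix_of_submatrix_eq [NonAssocSemiring R] {X : Matrix n n R} (e : Perm n)
    (h : X.submatrix e e = X) : Commute X (e.permMatrix R) := by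
  show X * e.toPEquiv.toMatrix = e.toPEquiv.toMatrix * X
  rw [PEquiv.mul_toMatrix_toPEquiv, PEquiv.toMatrix_toPEquiv_mul]
  ext i j
  simpa using (congr_fun₂ h i (e.symm j)).symm

end Matrix

def swap12 (α β : Type*) : Perm (α × α × β) where
  toFun x := (x.2.1, x.1, x.2.2)
  invFun x := (x.2.1, x.1, x.2.2)
  left_inv _ := rfl
  right_inv _ := rfl

@[simp]
theorem swap12_apply {α β : Type*} (x : α × α × β) : swap12 α β x = (x.2.1, x.1, x.2.2) := rfl

@[simp]
theorem swap12_symm (α β : Type*) : (swap12 α β).symm = swap12 α β := rfl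

abbrev swapKH : Perm Idx6 := (swap12 Q Q).prodCongr (swap12 Q Q)

theorem SwI_eq_permMatrix : SwI = (swap12 Q Q).permMatrix ℂ := by
  ext p q
  simp only [SwI, swap2, PEquiv.toMatrix_apply, toPEquiv_apply, Option.mem_def,
    Option.some.injEq, swap12_apply, Prod.ext_iff]
  split_ifs <;> simp_all

theorem IdKX_add (X Y : Mat8) : IdKX (X + Y) = IdKX X + IdKX Y := by
  ext p q
  simp [IdKX, mul_add]

theorem IdKX_smul (c : ℂ) (X : Mat8) : IdKX (c • X) = c • IdKX X := by
  ext p q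
  simp only [IdKX, Matrix.smul_apply, smul_eq_mul]
  ring

theorem IdKX_submatrix_prodCongr (e f : Perm Idx3) (X : Mat8) :
    (IdKX X).submatrix (e.prodCongr f) (e.prodCongr f) = IdKX (X.submatrix f f) := by
  ext p q
  simp [IdKX, e.injective.eq_iff]

theorem ketW_apply (W : Mat8) (p : Idx6) : ketW W p = W p.1 p.2 := by
  simp only [ketW, WtI, ketI, mulVec, dotProduct]
  rw [Fintype.sum_prod_type]
  simp [mul_ite]

theorem outer_ketW_prodCongr (W : Mat8) (e f : Perm Idx3) (a b : Idx6) :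
    outer (ketW W) (e.prodCongr f a) (e.prodCongr f b) = outer (ketW (W.submatrix e f)) a b := by
  simp [outer, ketW_apply]

theorem kron3_submatrix_swap12 (A B C : Mat2) :
    (kron3 A B C).submatrix (swap12 Q Q) (swap12 Q Q) = kron3 B A C := by
  ext p q
  simp only [kron3, submatrix_apply, swap12_apply]
  ring

theorem norm_outer_ketW_kron3_le_one (U V W : SU2) (a b : Idx6) :
    ‖outer (ketW (kron3 U V W)) a b‖ ≤ 1 := by
  have h : ∀ (U : SU2) i j, ‖(U : Mat2) i j‖ ≤ 1 := fun U =>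
    entry_norm_bound_of_unitary (specialUnitaryGroup_le_unitaryGroup U.2)
  simp only [outer, ketW_apply, kron3, map_mul, norm_mul, RCLike.norm_conj]
  have h3 : ∀ p q : Idx3, ‖(U : Mat2) p.1 q.1‖ * ‖(V : Mat2) p.2.1 q.2.1‖ *
      ‖(W : Mat2) p.2.2 q.2.2‖ ≤ 1 := fun p q =>
    mul_le_one₀ (mul_le_one₀ (h U _ _) (norm_nonneg _) (h V _ _)) (norm_nonneg _) (h W _ _)
  exact mul_le_one₀ (h3 a.1 a.2) (by positivity) (h3 b.1 b.2)

theorem continuous_outer_ketW_kron3 (a b : Idx6) :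
    Continuous fun W : Mat2 × Mat2 × Mat2 => outer (ketW (kron3 W.1 W.2.1 W.2.2)) a b := by
  simp only [outer, ketW_apply, kron3]
  fun_prop

theorem integrable_outer_ketW_kron3 {Y : Type*} [TopologicalSpace Y] [MeasurableSpace Y]
    [OpensMeasurableSpace Y] (ν : Measure Y) [IsFiniteMeasure ν] {f g h : Y → SU2}
    (hf : Continuous f) (hg : Continuous g) (hh : Continuous h) (a b : Idx6) :
    Integrable (fun y => outer (ketW (kron3 (f y) (g y) (h y))) a b) ν := by
  have hcont : Continuous fun y => ((f y : Mat2), (g y : Mat2), (h y : Mat2)) := by fun_prop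
  exact .of_bound ((continuous_outer_ketW_kron3 a b).comp hcont).aestronglyMeasurable 1
    (ae_of_all _ fun y => norm_outer_ketW_kron3_le_one (f y) (g y) (h y) a b)

theorem M1_submatrix_swapKH (μ : Measure SU2) [IsFiniteMeasure μ] :
    (M1 μ).submatrix swapKH swapKH = M2 μ := by
  ext a b
  simp only [M1, M2, submatrix_apply, outer_ketW_prodCongr, kron3_submatrix_swap12]
  exact integral_integral_swap <|
    integrable_outer_ketW_kron3 _ continuous_snd continuous_fst continuous_fst a b

theorem M2_submatrix_swapKH (μ : Measure SU2) [IsFiniteMeasure μ] :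
    (M2 μ).submatrix swapKH swapKH = M1 μ := by
  rw [← M1_submatrix_swapKH, submatrix_submatrix]
  rfl

theorem symmetrize_X_swap_general (μ : Measure SU2) [IsProbabilityMeasure μ]
    (P₁ P₂ : Mat64) (X : Mat8) (h₁ : P₁.PosSemidef) (h₂ : P₂.PosSemidef)
    (hX : X.PosSemidef) (hTr : X.trace = 1) (hsum : P₁ + P₂ = IdKX X) :
    ∃ (P₁' P₂' : Mat64) (X' : Mat8),
      P₁'.PosSemidef ∧ P₂'.PosSemidef ∧ X'.PosSemidef ∧ X'.trace = 1 ∧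
      P₁' + P₂' = IdKX X' ∧
      (1/2 : ℂ) * (M1 μ * P₁' + M2 μ * P₂').trace
        = (1/2 : ℂ) * (M1 μ * P₁ + M2 μ * P₂).trace ∧
      X' * SwI = SwI * X' := by
  have half_nonneg : (0 : ℂ) ≤ 1 / 2 := by positivity
  refine ⟨(1/2 : ℂ) • (P₁ + P₂.submatrix swapKH swapKH),
    (1/2 : ℂ) • (P₂ + P₁.submatrix swapKH swapKH),
    (1/2 : ℂ) • (X + X.submatrix (swap12 Q Q) (swap12 Q Q)), ?_, ?_, ?_, ?_, ?_, ?_, ?_⟩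
  · exact (h₁.add (h₂.submatrix _)).smul half_nonneg
  · exact (h₂.add (h₁.submatrix _)).smul half_nonneg
  · exact (hX.add (hX.submatrix _)).smul half_nonneg
  · rw [trace_smul, trace_add, trace_submatrix_equiv, hTr]
    norm_num
  · have hsum_swapped : P₁.submatrix swapKH swapKH + P₂.submatrix swapKH swapKH
        = IdKX (X.submatrix (swap12 Q Q) (swap12 Q Q)) := by
      rw [← IdKX_submatrix_prodCongr, ← hsum]
      rfl
    rw [← smul_add, add_add_add_comm, add_comm (P₂.submatrix _ _), hsum, hsum_swapped,
      ← IdKX_add, IdKX_smul]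
  · simp only [Matrix.mul_smul, Matrix.mul_add, trace_add, trace_smul,
      trace_mul_submatrix_equiv, prodCongr_symm, swap12_symm, M1_submatrix_swapKH,
      M2_submatrix_swapKH, smul_eq_mul]
    ring
  · rw [SwI_eq_permMatrix]
    refine commute_permMatrix_of_submatrix_eq _ ?_
    simp only [submatrix_smul, submatrix_add]
    rw [add_comm]
    rfl

/-- Any parallelized tester can be replaced, without changing the average success
probability, by one whose normalization operator `X'` commutes with the swap of the
`H1` and `H2` factors. -/
theorem symmetrize_X_swap (μ : Measure SU2) [IsProbabilityMeasure μ]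
    [μ.IsMulLeftInvariant]
    (P₁ P₂ : Mat64) (X : Mat8) (h₁ : P₁.PosSemidef) (h₂ : P₂.PosSemidef)
    (hX : X.PosSemidef) (hTr : X.trace = 1) (hsum : P₁ + P₂ = IdKX X) :
    ∃ (P₁' P₂' : Mat64) (X' : Mat8),
      P₁'.PosSemidef ∧ P₂'.PosSemidef ∧ X'.PosSemidef ∧ X'.trace = 1 ∧
      P₁' + P₂' = IdKX X' ∧
      (1/2 : ℂ) * (M1 μ * P₁' + M2 μ * P₂').trace
        = (1/2 : ℂ) * (M1 μ * P₁ + M2 μ * P₂).trace ∧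
      X' * SwI = SwI * X' :=
  symmetrize_X_swap_general μ P₁ P₂ X h₁ h₂ hX hTr hsum
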